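/- Let A be a positive operator on H and T, S A-bounded operators with TS = ST. Then r_A(TS) ≤ ½(ω_A(TS) + ‖T²‖_A^{1/2} ‖S²‖_A^{1/2}). -/

import Mathlib

open ContinuousLinearMap

variable {H : Type*} [NormedAddCommGroup H] [InnerProductSpace ℂ H] [CompleteSpace H]

/-- The seminorm `‖x‖_A = ‖A^{1/2} x‖ = √⟨Ax, x⟩` induced by a positive operator `A`. -/
noncomputable def anorm (A : H →L[ℂ] H) (x : H) : ℝ :=
  Real.sqrt (A.reApplyInnerSelf x)

/-- `T` is `A`-bounded: `‖Tx‖_A ≤ c ‖x‖_A` for some `c > 0`. -/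
def ABounded (A T : H →L[ℂ] H) : Prop :=
  ∃ c : ℝ, 0 < c ∧ ∀ x : H, anorm A (T x) ≤ c * anorm A x

/-- The operator seminorm `‖T‖_A`: the least `c ≥ 0` with `‖Tx‖_A ≤ c ‖x‖_A` for all `x`. -/
noncomputable def aNorm (A T : H →L[ℂ] H) : ℝ :=
  sInf {c : ℝ | 0 ≤ c ∧ ∀ x : H, anorm A (T x) ≤ c * anorm A x}

/-- The `A`-spectral radius `r_A(T) = inf_{n ≥ 1} ‖T^n‖_A^{1/n}`. -/
noncomputable def aSpecRad (A T : H →L[ℂ] H) : ℝ :=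
  ⨅ n : ℕ+, aNorm A (T ^ (n : ℕ)) ^ ((n : ℝ)⁻¹)

/-- The `A`-numerical radius `ω_A(T) = sup {|⟨ATx, x⟩| : ‖x‖_A = 1}`. -/
noncomputable def aNumRad (A T : H →L[ℂ] H) : ℝ :=
  sSup {c : ℝ | ∃ x : H, anorm A x = 1 ∧ c = ‖(inner ℂ (A (T x)) x : ℂ)‖}

open scoped InnerProductSpace ComplexConjugate

/-!
Two bounds on `r_A(TS)` are averaged. Since `T` and `S` commute, `(TS)² = T²S²`, so
`r_A(TS)² ≤ ‖(TS)²‖_A ≤ ‖T²‖_A ‖S²‖_A`. The other bound is `r_A(X) ≤ ω_A(X)`: the squaring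
inequality `ω_A(X²) ≤ ω_A(X)²` iterates to `ω_A(X^{2^k}) ≤ ω_A(X)^{2^k}`, and polarization gives
`‖Y‖_A ≤ 2 ω_A(Y)`, so `r_A(X)^{2^k} ≤ 2 ω_A(X)^{2^k}` for every `k`.
The `A`-seminorm is handled through `A^{1/2}`: `⟨Ax, y⟩ = ⟨A^{1/2}x, A^{1/2}y⟩` yields the
Cauchy–Schwarz inequality and the parallelogram law for `‖·‖_A`.
-/

open Filter Topology in
lemma le_of_forall_pow_le_mul_pow {a b C : ℝ} {N : ℕ → ℕ} (hb : 0 ≤ b)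
    (hN : Tendsto N atTop atTop) (h : ∀ k, a ^ N k ≤ C * b ^ N k) : a ≤ b := by
  by_contra! hab
  have ha : 0 < a := hb.trans_lt hab
  have hlim : Tendsto (fun k => C * (b / a) ^ N k) atTop (𝓝 0) := by
    simpa using ((tendsto_pow_atTop_nhds_zero_of_lt_one (div_nonneg hb ha.le)
      ((div_lt_one ha).2 hab)).comp hN).const_mul C
  obtain ⟨k, hk⟩ := (hlim.eventually (gt_mem_nhds one_pos)).exists
  rw [div_pow, mul_div_assoc', div_lt_one (by positivity)] at hk
  exact (h k).not_gt hk

lemma Complex.exists_norm_eq_one_conj_sq_mul (z : ℂ) :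
    ∃ d : ℂ, ‖d‖ = 1 ∧ conj d ^ 2 * z = ‖z‖ := by
  refine ⟨Complex.exp ((Complex.arg z / 2 : ℝ) * Complex.I), Complex.norm_exp_ofReal_mul_I _, ?_⟩
  nth_rw 2 [← Complex.norm_mul_exp_arg_mul_I z]
  rw [← Complex.exp_conj, map_mul, Complex.conj_ofReal, Complex.conj_I, ← Complex.exp_nat_mul,
    mul_left_comm, ← Complex.exp_add]
  push_cast
  ring_nf
  rw [Complex.exp_zero, mul_one]

section Seminorm

omit [CompleteSpace H]

lemma anorm_nonneg (A : H →L[ℂ] H) (x : H) : 0 ≤ anorm A x := Real.sqrt_nonneg _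

lemma anorm_smul (A : H →L[ℂ] H) (c : ℂ) (x : H) : anorm A (c • x) = ‖c‖ * anorm A x := by
  rw [anorm, reApplyInnerSelf_smul, Real.sqrt_mul (by positivity), Real.sqrt_sq (norm_nonneg c),
    anorm]

lemma aNorm_nonneg (A X : H →L[ℂ] H) : 0 ≤ aNorm A X :=
  Real.sInf_nonneg fun _ hc => hc.1

lemma aNumRad_nonneg (A X : H →L[ℂ] H) : 0 ≤ aNumRad A X :=
  Real.sSup_nonneg fun _ ⟨_, _, hc⟩ => hc ▸ norm_nonneg _

lemma aSpecRad_nonneg (A X : H →L[ℂ] H) : 0 ≤ aSpecRad A X :=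
  Real.iInf_nonneg fun _ => Real.rpow_nonneg (aNorm_nonneg A _) _

lemma aSpecRad_pow_le (A X : H →L[ℂ] H) {n : ℕ} (hn : n ≠ 0) :
    aSpecRad A X ^ n ≤ aNorm A (X ^ n) := by
  have h : aSpecRad A X ≤ aNorm A (X ^ n) ^ (n⁻¹ : ℝ) :=
    ciInf_le (f := fun m : ℕ+ => aNorm A (X ^ (m : ℕ)) ^ ((m : ℝ)⁻¹))
      ⟨0, by rintro _ ⟨m, rfl⟩; exact Real.rpow_nonneg (aNorm_nonneg A _) _⟩
      ⟨n, Nat.pos_of_ne_zero hn⟩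
  calc aSpecRad A X ^ n ≤ (aNorm A (X ^ n) ^ (n⁻¹ : ℝ)) ^ n :=
        pow_le_pow_left₀ (aSpecRad_nonneg A X) h n
    _ = aNorm A (X ^ n) := Real.rpow_inv_natCast_pow (aNorm_nonneg A _) hn

-- `ω_A(X) ≤ w`, in a form that does not depend on the supremum defining `ω_A` being finite.
def ANumRadLE (A X : H →L[ℂ] H) (w : ℝ) : Prop :=
  ∀ x, ‖⟪A (X x), x⟫_ℂ‖ ≤ w * anorm A x ^ 2

variable {A X Y : H →L[ℂ] H} {w : ℝ}

lemma ANumRadLE.smul (h : ANumRadLE A X w) (c : ℂ) : ANumRadLE A (c • X) (‖c‖ * w) := by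
  intro x
  rw [smul_apply, map_smul, inner_smul_left, norm_mul, RCLike.norm_conj, mul_assoc]
  exact mul_le_mul_of_nonneg_left (h x) (norm_nonneg c)

lemma aNorm_le_bound {c : ℝ} (hc : 0 ≤ c) (h : ∀ x, anorm A (X x) ≤ c * anorm A x) :
    aNorm A X ≤ c :=
  csInf_le ⟨0, fun _ hc => hc.1⟩ ⟨hc, h⟩

lemma ABounded.anorm_apply_le (hX : ABounded A X) (x : H) :
    anorm A (X x) ≤ aNorm A X * anorm A x := by
  obtain ⟨c, hc, hcX⟩ := hX
  rcases (anorm_nonneg A x).eq_or_lt with hx | hx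
  · simpa [← hx] using hcX x
  · rw [← div_le_iff₀ hx]
    exact le_csInf ⟨c, hc.le, hcX⟩ fun b hb => (div_le_iff₀ hx).2 (hb.2 x)

lemma ABounded.mul (hX : ABounded A X) (hY : ABounded A Y) :
    ABounded A (X * Y) := by
  obtain ⟨c, hc, hcX⟩ := hX
  obtain ⟨d, hd, hdY⟩ := hY
  refine ⟨c * d, mul_pos hc hd, fun x => ?_⟩
  rw [mul_apply_eq_comp, mul_assoc]
  exact (hcX (Y x)).trans (mul_le_mul_of_nonneg_left (hdY x) hc.le)

lemma aNorm_mul_le (hX : ABounded A X) (hY : ABounded A Y) :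
    aNorm A (X * Y) ≤ aNorm A X * aNorm A Y := by
  refine aNorm_le_bound (mul_nonneg (aNorm_nonneg A X) (aNorm_nonneg A Y)) fun x => ?_
  rw [mul_apply_eq_comp, mul_assoc]
  exact (hX.anorm_apply_le (Y x)).trans
    (mul_le_mul_of_nonneg_left (hY.anorm_apply_le x) (aNorm_nonneg A X))

end Seminorm

section PositiveOperator

variable {A X : H →L[ℂ] H} {w : ℝ} (hA : A.IsPositive)
include hA

lemma inner_apply_eq_inner_sqrt (x y : H) :
    ⟪A x, y⟫_ℂ = ⟪CFC.sqrt A x, CFC.sqrt A y⟫_ℂ := by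
  have hsa : IsSelfAdjoint (CFC.sqrt A) := IsSelfAdjoint.of_nonneg (CFC.sqrt_nonneg A)
  conv_lhs =>
    rw [← CFC.sqrt_mul_sqrt_self A ((nonneg_iff_isPositive A).mpr hA), mul_apply_eq_comp]
  exact (isSelfAdjoint_iff_isSymmetric.mp hsa) _ y

lemma anorm_eq_norm_sqrt (x : H) : anorm A x = ‖CFC.sqrt A x‖ := by
  rw [anorm, reApplyInnerSelf, inner_apply_eq_inner_sqrt hA, inner_self_eq_norm_sq_to_K]
  norm_cast
  exact Real.sqrt_sq (norm_nonneg _)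

lemma inner_apply_self (x : H) : ⟪A x, x⟫_ℂ = (anorm A x ^ 2 : ℝ) := by
  rw [inner_apply_eq_inner_sqrt hA, inner_self_eq_norm_sq_to_K, anorm_eq_norm_sqrt hA]
  norm_cast

lemma norm_inner_apply_le (x y : H) : ‖⟪A x, y⟫_ℂ‖ ≤ anorm A x * anorm A y := by
  rw [inner_apply_eq_inner_sqrt hA, anorm_eq_norm_sqrt hA, anorm_eq_norm_sqrt hA]
  exact norm_inner_le_norm _ _

lemma anorm_add_sq_add_anorm_sub_sq (x y : H) :
    anorm A (x + y) ^ 2 + anorm A (x - y) ^ 2 = 2 * (anorm A x ^ 2 + anorm A y ^ 2) := by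
  simp only [anorm_eq_norm_sqrt hA, map_add, map_sub, sq]
  linarith [parallelogram_law_with_norm ℂ (CFC.sqrt A x) (CFC.sqrt A y)]

lemma aNumRadLE_aNumRad (hX : ABounded A X) : ANumRadLE A X (aNumRad A X) := by
  intro x
  rcases (anorm_nonneg A x).eq_or_lt with hx | hx
  · simpa [← hx] using norm_inner_apply_le hA (X x) x
  obtain ⟨c, -, hcX⟩ := hX
  have hbdd : BddAbove {c : ℝ | ∃ x : H, anorm A x = 1 ∧ c = ‖⟪A (X x), x⟫_ℂ‖} := by
    refine ⟨c, ?_⟩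
    rintro _ ⟨y, hy, rfl⟩
    calc ‖⟪A (X y), y⟫_ℂ‖ ≤ anorm A (X y) * anorm A y := norm_inner_apply_le hA _ _
      _ ≤ c := by simpa [hy] using hcX y
  set y : H := ((anorm A x : ℂ))⁻¹ • x
  have hy : anorm A y = 1 := by
    rw [anorm_smul, norm_inv, Complex.norm_real, Real.norm_of_nonneg hx.le, inv_mul_cancel₀ hx.ne']
  have hyx : ‖⟪A (X y), y⟫_ℂ‖ = ‖⟪A (X x), x⟫_ℂ‖ / anorm A x ^ 2 := by
    rw [map_smul, map_smul, inner_smul_left, inner_smul_right, norm_mul, norm_mul,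
      RCLike.norm_conj, norm_inv, Complex.norm_real, Real.norm_of_nonneg hx.le]
    field_simp
  have hle : ‖⟪A (X y), y⟫_ℂ‖ ≤ aNumRad A X := le_csSup hbdd ⟨y, hy, rfl⟩
  rwa [hyx, div_le_iff₀ (by positivity)] at hle

lemma ANumRadLE.norm_inner_le (h : ANumRadLE A X w) (x y : H) :
    ‖⟪A (X x), y⟫_ℂ‖ ≤ w * (anorm A x ^ 2 + anorm A y ^ 2) := by
  have hpol := inner_map_polarization' (A * X).toLinearMap x y
  simp only [coe_coe, mul_apply_eq_comp] at hpol
  have hIy : anorm A (Complex.I • y) = anorm A y := by rw [anorm_smul, Complex.norm_I, one_mul]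
  have hI := anorm_add_sq_add_anorm_sub_sq hA x (Complex.I • y)
  rw [hIy] at hI
  have hnorm : ∀ z : ℂ, ‖Complex.I * z‖ = ‖z‖ := by simp
  rw [hpol, norm_div, RCLike.norm_ofNat, div_le_iff₀ (by norm_num)]
  calc _ ≤ ‖⟪A (X (x + y)), x + y⟫_ℂ‖ + ‖⟪A (X (x - y)), x - y⟫_ℂ‖
        + ‖⟪A (X (x + Complex.I • y)), x + Complex.I • y⟫_ℂ‖
        + ‖⟪A (X (x - Complex.I • y)), x - Complex.I • y⟫_ℂ‖ := by
        refine (norm_add_le _ _).trans (add_le_add ((norm_sub_le _ _).trans ?_) (hnorm _).le)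
        exact add_le_add (norm_sub_le _ _) (hnorm _).le
    _ ≤ w * anorm A (x + y) ^ 2 + w * anorm A (x - y) ^ 2
        + w * anorm A (x + Complex.I • y) ^ 2 + w * anorm A (x - Complex.I • y) ^ 2 := by
        gcongr <;> apply h
    _ = _ := by linear_combination w * anorm_add_sq_add_anorm_sub_sq hA x y + w * hI

lemma ANumRadLE.aNorm_le (hw : 0 ≤ w) (h : ANumRadLE A X w) : aNorm A X ≤ 2 * w := by
  refine aNorm_le_bound (by positivity) fun x => ?_
  have key (c : ℝ) :
      c * anorm A (X x) ^ 2 ≤ w * (anorm A x ^ 2 + c ^ 2 * anorm A (X x) ^ 2) := by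
    have hc := h.norm_inner_le hA x ((c : ℂ) • X x)
    rw [inner_smul_right, inner_apply_self hA, norm_mul, Complex.norm_real, Complex.norm_real,
      Real.norm_of_nonneg (sq_nonneg _), anorm_smul, Complex.norm_real, mul_pow, Real.norm_eq_abs,
      sq_abs] at hc
    exact (mul_le_mul_of_nonneg_right (le_abs_self c) (sq_nonneg _)).trans hc
  have hXx := anorm_nonneg A (X x)
  have hx := anorm_nonneg A x
  rcases hw.eq_or_lt with rfl | hw
  · nlinarith [key 1]
  · have h2 := key (2 * w)⁻¹
    field_simp at h2
    exact abs_le_of_sq_le_sq' (by nlinarith) (by positivity) |>.2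

lemma ANumRadLE.mul_re_inner_mul_self_le (h : ANumRadLE A X w) (x : H) (t : ℝ) :
    t * ((⟪A (X (X x)), x⟫_ℂ).re + anorm A (X x) ^ 2)
      ≤ w * (anorm A (X x) ^ 2 + t ^ 2 * anorm A x ^ 2) := by
  set u := X x + (t : ℂ) • x
  set v := X x - (t : ℂ) • x
  have hdiff : ⟪A (X u), u⟫_ℂ - ⟪A (X v), v⟫_ℂ
      = (2 * t : ℝ) * (⟪A (X (X x)), x⟫_ℂ + (anorm A (X x) ^ 2 : ℝ)) := by
    simp only [u, v, map_add, map_sub, map_smul, inner_add_left, inner_add_right, inner_sub_left,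
      inner_sub_right, inner_smul_left, inner_smul_right, Complex.conj_ofReal,
      ← inner_apply_self hA]
    push_cast
    ring
  have hre := congrArg Complex.re hdiff
  rw [Complex.re_ofReal_mul, Complex.add_re, Complex.ofReal_re] at hre
  have huv :
      anorm A u ^ 2 + anorm A v ^ 2 = 2 * (anorm A (X x) ^ 2 + t ^ 2 * anorm A x ^ 2) := by
    rw [anorm_add_sq_add_anorm_sub_sq hA, anorm_smul, Complex.norm_real, mul_pow,
      Real.norm_eq_abs, sq_abs]
  have := (Complex.re_le_norm _).trans ((norm_sub_le _ _).trans (add_le_add (h u) (h v)))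
  rw [← mul_add, huv, hre] at this
  linarith

lemma ANumRadLE.mul_self (hw : 0 ≤ w) (h : ANumRadLE A X w) : ANumRadLE A (X * X) (w ^ 2) := by
  intro x
  set z := ⟪A ((X * X) x), x⟫_ℂ
  -- Rotating `X` by a unit `d` makes `⟪A ((d • X)² x), x⟫` real and nonnegative.
  obtain ⟨d, hd, hdz⟩ := Complex.exists_norm_eq_one_conj_sq_mul z
  have hY : ANumRadLE A (d • X) w := by simpa [hd] using h.smul d
  have hYY : ⟪A ((d • X) ((d • X) x)), x⟫_ℂ = ‖z‖ := by
    rw [← hdz, smul_apply, smul_apply, map_smul, map_smul, map_smul, inner_smul_left,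
      inner_smul_left, ← mul_assoc, ← sq]
    rfl
  have key (t : ℝ) :
      t * (‖z‖ + anorm A (X x) ^ 2) ≤ w * (anorm A (X x) ^ 2 + t ^ 2 * anorm A x ^ 2) := by
    have := hY.mul_re_inner_mul_self_le hA x t
    rwa [hYY, Complex.ofReal_re, smul_apply, anorm_smul, hd, one_mul] at this
  have hXx := anorm_nonneg A (X x)
  rcases hw.eq_or_lt with rfl | hw
  · nlinarith [key 1]
  · nlinarith [key w]

lemma ANumRadLE.pow_two_pow (hw : 0 ≤ w) (h : ANumRadLE A X w) (k : ℕ) :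
    ANumRadLE A (X ^ 2 ^ k) (w ^ 2 ^ k) := by
  induction k with
  | zero => simpa using h
  | succ k ih =>
    rw [pow_succ, pow_mul, pow_mul, sq]
    exact ih.mul_self hA (by positivity)

lemma aSpecRad_le_aNumRad (hX : ABounded A X) : aSpecRad A X ≤ aNumRad A X := by
  have hw := aNumRad_nonneg A X
  have hX := aNumRadLE_aNumRad hA hX
  refine le_of_forall_pow_le_mul_pow hw (tendsto_pow_atTop_atTop_of_one_lt one_lt_two) fun k =>
    (aSpecRad_pow_le A X (by positivity)).trans
      ((hX.pow_two_pow hA hw k).aNorm_le hA (by positivity))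

end PositiveOperator

/-- for commuting `A`-bounded `T, S`,
`r_A(TS) ≤ (ω_A(TS) + ‖T²‖_A^{1/2} ‖S²‖_A^{1/2}) / 2`. -/
theorem stmt16 (A T S : H →L[ℂ] H) (hA : A.IsPositive)
    (hT : ABounded A T) (hS : ABounded A S) (hc : T * S = S * T) :
    aSpecRad A (T * S) ≤
      (aNumRad A (T * S) +
        Real.sqrt (aNorm A (T ^ 2)) * Real.sqrt (aNorm A (S ^ 2))) / 2 := by
  have hsq : aSpecRad A (T * S) ≤ Real.sqrt (aNorm A (T ^ 2)) * Real.sqrt (aNorm A (S ^ 2)) := by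
    rw [← Real.sqrt_mul (aNorm_nonneg A _), Real.le_sqrt (aSpecRad_nonneg A _)
      (mul_nonneg (aNorm_nonneg A _) (aNorm_nonneg A _))]
    calc aSpecRad A (T * S) ^ 2 ≤ aNorm A ((T * S) ^ 2) := aSpecRad_pow_le A _ two_ne_zero
      _ = aNorm A (T ^ 2 * S ^ 2) := by rw [Commute.mul_pow hc]
      _ ≤ aNorm A (T ^ 2) * aNorm A (S ^ 2) := by
        rw [sq, sq]
        exact aNorm_mul_le (hT.mul hT) (hS.mul hS)
  linarith [aSpecRad_le_aNumRad hA (hT.mul hS)]
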